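/- The histopolation operator reproduces polynomials of degree at most N−1: if q is a polynomial of degree ≤ N−1, then p²(q) = q. -/

import Mathlib

/-!
Let `Q` be an antiderivative of `q`; then `deg Q ≤ N`, so Lagrange interpolation gives
`Q = ∑ⱼ Q(ξⱼ) lⱼ` and hence `q = ∑ⱼ Q(ξⱼ) lⱼ'`. The histopolation coefficients
are `∫_{ξᵢ₋₁}^{ξᵢ} q = Q(ξᵢ) - Q(ξᵢ₋₁)`, and summation by parts turns
`∑ᵢ (Q(ξᵢ) - Q(ξᵢ₋₁)) hᵢ` into `∑ⱼ Q(ξⱼ) lⱼ' - Q(ξ_N) ∑ⱼ lⱼ'`, whose last sum vanishes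
because `∑ⱼ lⱼ = 1`.
-/

open Finset Polynomial

theorem Fin.sum_univ_smul_by_parts {R M : Type*} [Ring R] [AddCommGroup M] [Module R M]
    (n : ℕ) (a : Fin (n + 1) → R) (v : Fin (n + 1) → M) :
    ∑ j, a j • v j = a (Fin.last n) • ∑ j, v j
      - ∑ i : Fin n, (a i.succ - a i.castSucc) • ∑ j : Fin (n + 1),
          if (j : ℕ) < (i : ℕ) + 1 then v j else 0 := by
  induction n with
  | zero => simp
  | succ n ih =>
    have partial_castSucc (i : Fin (n + 1)) :
        (∑ j : Fin (n + 2), if (j : ℕ) < (i : ℕ) + 1 then v j else 0) =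
          ∑ j : Fin (n + 1), if (j : ℕ) < (i : ℕ) + 1 then v j.castSucc else 0 := by
      simp [Fin.sum_univ_castSucc (n := n + 1), not_lt.mpr i.is_le]
    rw [Fin.sum_univ_castSucc (f := fun j => a j • v j),
      ih (fun j => a j.castSucc) (fun j => v j.castSucc), Fin.sum_univ_castSucc (f := v),
      Fin.sum_univ_castSucc (f := fun i : Fin (n + 1) => (a i.succ - a i.castSucc) • _)]
    simp only [partial_castSucc]
    simp only [castSucc_succ, Order.lt_add_one_iff, sub_smul, sum_sub_distrib, smul_add,
      val_castSucc, succ_last, val_last, is_le, ↓reduceIte]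
    abel

namespace Polynomial

theorem exists_derivative_eq {K : Type*} [Field K] [CharZero K] (q : K[X]) :
    ∃ Q : K[X], derivative Q = q ∧ Q.natDegree ≤ q.natDegree + 1 := by
  refine ⟨∑ n ∈ range (q.natDegree + 1), monomial (n + 1) (q.coeff n / (n + 1)), ?_, ?_⟩
  · conv_rhs => rw [q.as_sum_range' (q.natDegree + 1) (Nat.lt_succ_self _)]
    refine (derivative_sum).trans (sum_congr rfl fun n _ => ?_)
    rw [derivative_monomial, Nat.add_sub_cancel, Nat.cast_add_one,
      div_mul_cancel₀ _ (Nat.cast_add_one_ne_zero n)]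
  · refine (natDegree_sum_le_of_forall_le _ _ fun n hn => ?_)
    exact (natDegree_monomial_le _).trans (by simpa using hn)

section Interpolation

variable {R ι : Type*} [CommRing R] [IsDomain R] [Fintype ι] [DecidableEq ι]
  {v : ι → R} {l : ι → R[X]}

theorem eq_sum_eval_smul_of_eval_eq_ite (hv : Function.Injective v)
    (hl_deg : ∀ i, (l i).natDegree < Fintype.card ι)
    (hl : ∀ i j, (l i).eval (v j) = if i = j then 1 else 0)
    {P : R[X]} (hP : P.natDegree < Fintype.card ι) :
    P = ∑ j, P.eval (v j) • l j := by
  have mem_degreeLT_card {p : R[X]} (hp : p.natDegree < Fintype.card ι) :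
      p ∈ degreeLT R (Fintype.card ι) :=
    mem_degreeLT.mpr (degree_le_natDegree.trans_lt (by exact_mod_cast hp))
  have hsum_mem : ∑ j, P.eval (v j) • l j ∈ degreeLT R (Fintype.card ι) :=
    Submodule.sum_mem _ fun j _ => Submodule.smul_mem _ _ (mem_degreeLT_card (hl_deg j))
  refine eq_of_degrees_lt_of_eval_index_eq univ hv.injOn
    (mem_degreeLT.mp (mem_degreeLT_card hP)) (mem_degreeLT.mp hsum_mem) fun i _ => ?_
  simp [eval_finsetSum, hl]

theorem sum_eq_one_of_eval_eq_ite [Nonempty ι] (hv : Function.Injective v)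
    (hl_deg : ∀ i, (l i).natDegree < Fintype.card ι)
    (hl : ∀ i j, (l i).eval (v j) = if i = j then 1 else 0) :
    ∑ j, l j = 1 := by
  simpa using (eq_sum_eval_smul_of_eval_eq_ite hv hl_deg hl (P := 1)
    (by simpa using Fintype.card_pos)).symm

end Interpolation

theorem integral_eval_derivative (Q : ℝ[X]) (a b : ℝ) :
    ∫ x in a..b, (derivative Q).eval x = Q.eval b - Q.eval a :=
  intervalIntegral.integral_eq_sub_of_hasDerivAt (fun x _ => Q.hasDerivAt x)
    ((Polynomial.continuous _).intervalIntegrable _ _)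

end Polynomial

theorem histopolation_reproduces_polynomials
    (N : ℕ) (hN : 1 ≤ N) (ξ : Fin (N + 1) → ℝ)
    (hmono : StrictMono ξ)
    (l : Fin (N + 1) → Polynomial ℝ)
    (hdeg : ∀ i, (l i).natDegree ≤ N)
    (hlag : ∀ i j, (l i).eval (ξ j) = if i = j then 1 else 0)
    (h : Fin N → Polynomial ℝ)
    (hdef : ∀ i : Fin N,
      h i = -∑ j : Fin (N + 1), if (j : ℕ) < (i : ℕ) + 1 then derivative (l j) else 0) :
    ∀ q : Polynomial ℝ, q.natDegree ≤ N - 1 →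
      (∑ i : Fin N, (∫ s in (ξ i.castSucc)..(ξ i.succ), q.eval s) • h i) = q := by
  intro q hq
  have hl_deg (i : Fin (N + 1)) : (l i).natDegree < Fintype.card (Fin (N + 1)) := by
    rw [Fintype.card_fin]; exact Nat.lt_succ_of_le (hdeg i)
  obtain ⟨Q, rfl, hQ_deg⟩ := exists_derivative_eq q
  have hQ : Q = ∑ j, Q.eval (ξ j) • l j :=
    eq_sum_eval_smul_of_eval_eq_ite hmono.injective hl_deg hlag (by rw [Fintype.card_fin]; omega)
  have hsum : ∑ j, derivative (l j) = 0 := by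
    rw [← derivative_sum, sum_eq_one_of_eval_eq_ite hmono.injective hl_deg hlag, derivative_one]
  calc ∑ i : Fin N, (∫ s in (ξ i.castSucc)..(ξ i.succ), (derivative Q).eval s) • h i
      = -∑ i : Fin N, (Q.eval (ξ i.succ) - Q.eval (ξ i.castSucc)) •
          ∑ j : Fin (N + 1), if (j : ℕ) < (i : ℕ) + 1 then derivative (l j) else 0 := by
        simp only [integral_eval_derivative, hdef, smul_neg, sum_neg_distrib]
    _ = ∑ j, Q.eval (ξ j) • derivative (l j) := by
        rw [Fin.sum_univ_smul_by_parts N (fun j => Q.eval (ξ j)) (fun j => derivative (l j)), hsum,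
          smul_zero, zero_sub]
    _ = derivative Q := by
        conv_rhs => rw [hQ]
        simp only [derivative_sum, derivative_smul]
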